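/- Let m ∈ ℕ, w ∈ ℤ^m with w_i ≥ 1 for all i, W ∈ ℤ with 1 ≤ W ≤ Σ_{i=1}^m w_i − 1, and M := Σ_{i=1}^m w_i + 1. Define n := m+1, a := (w_1, …, w_m, M), d := (−w_1, …, −w_m, M), ĉ := ((2M−1)w_1, …, (2M−1)w_m, 2M²), and U := { c ∈ ℝ^n : c ≥ ĉ componentwise, Σ_{i=1}^n (c_i − ĉ_i) ≤ W }. Let f(W) := inf over c ∈ U of min{ d^T x : x an optimal solution of (max c^T x s.t. a^T x ≤ W, 0 ≤ x ≤ 1), and x minimal in d^T x among those optimal solutions }. Then f(W) = −W if and only if there exists S ⊆ {1,…,m} with Σ_{i∈S} w_i = W; moreover, if no such S exists, then f(W) = W − 2V where V is the largest subset sum of {w_1,…,w_m} with V < W. -/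

import Mathlib

/-- Feasibility for the follower's continuous knapsack problem. -/
def feasibleKP {n : ℕ} (a : Fin n → ℝ) (b : ℝ) (x : Fin n → ℝ) : Prop :=
  (∑ i, a i * x i) ≤ b ∧ ∀ i, 0 ≤ x i ∧ x i ≤ 1

/-- Optimality for the follower's continuous knapsack problem with profits `c`. -/
def optimalKP {n : ℕ} (a c : Fin n → ℝ) (b : ℝ) (x : Fin n → ℝ) : Prop :=
  feasibleKP a b x ∧ ∀ y, feasibleKP a b y → ∑ i, c i * y i ≤ ∑ i, c i * x i

/-! Against profits `c ∈ U`, an optimal follower response fills the knapsack: the last item has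
profit-to-weight ratio at least `2M` and cannot be packed completely, since `M > W`. It packs a
small item `i` only if the adversary raised `c_i` by at least `w_i`, for otherwise that item's
ratio stays below `2M`. So the packed small items form a set `S` with `∑_S w ≤ Γ = W`, and on a
full knapsack `d·x = W - 2 ∑ w_i x_i ≥ W - 2 ∑_S w`. Conversely, raising the profits of the items
of `S` by `w_i` makes `1_S`, topped up with the last item, an optimal response of value
`W - 2 ∑_S w`. Hence `f(W) = W - 2V`, with `V` the largest subset sum not exceeding `W`. -/

open Function

section Knapsack

variable {n : ℕ} {a c x : Fin n → ℝ} {b : ℝ}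

theorem sum_mul_update (c x : Fin n → ℝ) (k : Fin n) (v : ℝ) :
    ∑ j, c j * update x k v j = ∑ j, c j * x j + c k * (v - x k) := by
  rw [← Finset.add_sum_erase _ _ (Finset.mem_univ k),
    ← Finset.add_sum_erase _ _ (Finset.mem_univ k),
    Finset.sum_congr rfl fun j hj => by rw [update_of_ne (Finset.ne_of_mem_erase hj)]]
  simp only [update_self]
  ring

theorem feasibleKP.update (hx : feasibleKP a b x) (k : Fin n) {v : ℝ} (hv₀ : 0 ≤ v)
    (hv₁ : v ≤ 1) (hcap : ∑ j, a j * x j + a k * (v - x k) ≤ b) :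
    feasibleKP a b (update x k v) := by
  refine ⟨by rwa [sum_mul_update], fun j => ?_⟩
  rcases eq_or_ne j k with rfl | hj
  · simpa using ⟨hv₀, hv₁⟩
  · simpa [update_of_ne hj] using hx.2 j

theorem optimalKP.sum_mul_eq (hx : optimalKP a c b x) {k : Fin n} (hak : 0 < a k)
    (hck : 0 < c k) (hxk : x k < 1) : ∑ j, a j * x j = b := by
  by_contra hne
  have hslack : 0 < b - ∑ j, a j * x j := sub_pos.2 (lt_of_le_of_ne hx.1.1 hne)
  set t := min ((b - ∑ j, a j * x j) / a k) (1 - x k)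
  have ht : 0 < t := lt_min (div_pos hslack hak) (sub_pos.2 hxk)
  have hta : a k * t ≤ b - ∑ j, a j * x j := by
    rw [← le_div_iff₀' hak]; exact min_le_left _ _
  have htk : t ≤ 1 - x k := min_le_right _ _
  have hfeas : feasibleKP a b (update x k (x k + t)) :=
    hx.1.update k (by linarith [(hx.1.2 k).1]) (by linarith) (by linarith)
  have := hx.2 _ hfeas
  rw [sum_mul_update] at this
  nlinarith

/-- Exchange argument: moving capacity from item `i` to item `k` cannot pay off. -/
theorem optimalKP.mul_le_mul_of_pos_of_lt_one (hx : optimalKP a c b x) {i k : Fin n}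
    (hik : i ≠ k) (hai : 0 < a i) (hak : 0 < a k) (hxi : 0 < x i) (hxk : x k < 1) :
    c k * a i ≤ c i * a k := by
  set s := min (x i / a k) ((1 - x k) / a i)
  have hs : 0 < s := lt_min (div_pos hxi hak) (div_pos (sub_pos.2 hxk) hai)
  have hsi : s * a k ≤ x i := (le_div_iff₀ hak).1 (min_le_left _ _)
  have hsk : s * a i ≤ 1 - x k := (le_div_iff₀ hai).1 (min_le_right _ _)
  have hsak : 0 < s * a k := mul_pos hs hak
  set y := update x i (x i - s * a k)
  have hyk : y k = x k := update_of_ne hik.symm _ _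
  have hy : feasibleKP a b y :=
    hx.1.update i (by linarith) (by linarith [(hx.1.2 i).2])
      (by nlinarith [hx.1.1, mul_pos hai hsak])
  have hz : feasibleKP a b (update y k (x k + s * a i)) := by
    refine hy.update k (by nlinarith [(hx.1.2 k).1]) (by linarith) ?_
    rw [sum_mul_update, hyk]; nlinarith [hx.1.1]
  have := hx.2 _ hz
  rw [sum_mul_update, hyk, sum_mul_update] at this
  nlinarith

/-- `r` is a dual price of the capacity constraint. -/
theorem optimalKP_of_le_mul {r : ℝ} (hr : 0 ≤ r) (hle : ∀ j, c j ≤ r * a j)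
    (heq : ∀ j, c j * x j = r * a j * x j) (hx : feasibleKP a b x)
    (hcap : ∑ j, a j * x j = b) : optimalKP a c b x := by
  refine ⟨hx, fun y hy => ?_⟩
  calc ∑ j, c j * y j ≤ ∑ j, r * (a j * y j) :=
        Finset.sum_le_sum fun j _ => by
          rw [← mul_assoc]; exact mul_le_mul_of_nonneg_right (hle j) (hy.2 j).1
    _ = r * ∑ j, a j * y j := (Finset.mul_sum _ _ _).symm
    _ ≤ r * b := mul_le_mul_of_nonneg_left hy.1 hr
    _ = ∑ j, c j * x j := by
        simp only [heq, mul_assoc, ← Finset.mul_sum, hcap]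

end Knapsack

namespace SimplicialReduction

variable {m : ℕ} (w : Fin m → ℤ) (W : ℤ)

noncomputable def bigM : ℝ := (∑ i, (w i : ℝ)) + 1

noncomputable def weights : Fin (m + 1) → ℝ := fun i =>
  if h : (i : ℕ) < m then (w ⟨i, h⟩ : ℝ) else bigM w

noncomputable def leaderCost : Fin (m + 1) → ℝ := fun i =>
  if h : (i : ℕ) < m then -(w ⟨i, h⟩ : ℝ) else bigM w

noncomputable def nominalProfit : Fin (m + 1) → ℝ := fun i =>
  if h : (i : ℕ) < m then (2 * bigM w - 1) * (w ⟨i, h⟩ : ℝ) else 2 * bigM w ^ 2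

def uncertaintySet : Set (Fin (m + 1) → ℝ) :=
  {c | (∀ i, nominalProfit w i ≤ c i) ∧ (∑ i, (c i - nominalProfit w i)) ≤ (W : ℝ)}

def pessimisticValues : Set ℝ :=
  {v | ∃ c ∈ uncertaintySet w W, ∃ x : Fin (m + 1) → ℝ,
    optimalKP (weights w) c W x ∧
    (∀ x', optimalKP (weights w) c W x' →
      ∑ i, leaderCost w i * x i ≤ ∑ i, leaderCost w i * x' i) ∧
    v = ∑ i, leaderCost w i * x i}

@[simp] theorem weights_castSucc (i : Fin m) : weights w i.castSucc = w i := by simp [weights]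
@[simp] theorem weights_last : weights w (Fin.last m) = bigM w := by simp [weights]
@[simp] theorem leaderCost_castSucc (i : Fin m) : leaderCost w i.castSucc = -w i := by
  simp [leaderCost]
@[simp] theorem leaderCost_last : leaderCost w (Fin.last m) = bigM w := by simp [leaderCost]
@[simp] theorem nominalProfit_castSucc (i : Fin m) :
    nominalProfit w i.castSucc = (2 * bigM w - 1) * w i := by simp [nominalProfit]
@[simp] theorem nominalProfit_last : nominalProfit w (Fin.last m) = 2 * bigM w ^ 2 := by
  simp [nominalProfit]

variable {w W}

theorem bigM_pos (hw : ∀ i, 1 ≤ w i) : 0 < bigM w := by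
  have : 0 ≤ ∑ i, (w i : ℝ) :=
    Finset.sum_nonneg fun i _ => by exact_mod_cast zero_le_one.trans (hw i)
  unfold bigM; linarith

theorem lt_bigM (hW : W ≤ ∑ i, w i - 1) : (W : ℝ) < bigM w := by
  have : (W : ℝ) ≤ ∑ i, (w i : ℝ) - 1 := by exact_mod_cast hW
  unfold bigM; linarith

theorem sum_leaderCost_mul (x : Fin (m + 1) → ℝ) :
    ∑ j, leaderCost w j * x j = ∑ j, weights w j * x j - 2 * ∑ i, (w i : ℝ) * x i.castSucc := by
  simp only [Fin.sum_univ_castSucc, leaderCost_castSucc, leaderCost_last, weights_castSucc,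
    weights_last, neg_mul, Finset.sum_neg_distrib]
  ring

theorem last_lt_one_of_feasibleKP (hw : ∀ i, 1 ≤ w i) (hW : W ≤ ∑ i, w i - 1)
    {x : Fin (m + 1) → ℝ} (hx : feasibleKP (weights w) W x) : x (Fin.last m) < 1 := by
  have hload : 0 ≤ ∑ i, (w i : ℝ) * x i.castSucc := Finset.sum_nonneg fun i _ =>
    mul_nonneg (by exact_mod_cast (zero_le_one.trans (hw i))) (hx.2 _).1
  have hcap := hx.1
  rw [Fin.sum_univ_castSucc] at hcap
  simp only [weights_castSucc, weights_last] at hcap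
  by_contra! h
  nlinarith [lt_bigM hW, bigM_pos hw]

section Follower

variable {c x : Fin (m + 1) → ℝ} (hw : ∀ i, 1 ≤ w i) (hW : W ≤ ∑ i, w i - 1)
  (hc : ∀ j, nominalProfit w j ≤ c j) (hx : optimalKP (weights w) c W x)
include hw hW hc hx

theorem sum_weights_mul_eq : ∑ j, weights w j * x j = W := by
  have hM := bigM_pos hw
  refine hx.sum_mul_eq (k := Fin.last m) (by simpa using hM) ?_
    (last_lt_one_of_feasibleKP hw hW hx.1)
  have hlast := hc (Fin.last m)
  rw [nominalProfit_last] at hlast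
  nlinarith

/-- Otherwise item `i` has ratio below `2M`, that of the last item, which is not fully packed. -/
theorem weight_le_of_pos (i : Fin m) (hxi : 0 < x i.castSucc) :
    (w i : ℝ) ≤ c i.castSucc - nominalProfit w i.castSucc := by
  have hM := bigM_pos hw
  have hwi : (1 : ℝ) ≤ w i := by exact_mod_cast hw i
  have hex := hx.mul_le_mul_of_pos_of_lt_one (Fin.castSucc_lt_last i).ne
    (by simp only [weights_castSucc]; linarith) (by simpa using hM) hxi
    (last_lt_one_of_feasibleKP hw hW hx.1)
  have hlast := hc (Fin.last m)
  simp only [weights_castSucc, weights_last, nominalProfit_last] at hex hlast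
  have : 2 * bigM w * w i ≤ c i.castSucc := by
    refine le_of_mul_le_mul_right ?_ hM
    nlinarith
  rw [nominalProfit_castSucc]
  linarith

end Follower

section Leader

variable {c x : Fin (m + 1) → ℝ} (hw : ∀ i, 1 ≤ w i) (hW : W ≤ ∑ i, w i - 1)
include hw hW

/-- `S` is the set of packed small items, whose raised profits the budget `Γ = W` pays for. -/
theorem exists_subset_sum_le (hcU : c ∈ uncertaintySet w W) (hx : optimalKP (weights w) c W x) :
    ∃ S : Finset (Fin m), ∑ i ∈ S, (w i : ℝ) ≤ W ∧
      ∑ i, (w i : ℝ) * x i.castSucc ≤ ∑ i ∈ S, (w i : ℝ) := by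
  set S := Finset.univ.filter fun i : Fin m => 0 < x i.castSucc
  refine ⟨S, ?_, ?_⟩
  · have hbump : ∀ j, 0 ≤ c j - nominalProfit w j := fun j => sub_nonneg.2 (hcU.1 j)
    calc ∑ i ∈ S, (w i : ℝ)
        ≤ ∑ i ∈ S, (c i.castSucc - nominalProfit w i.castSucc) :=
          Finset.sum_le_sum fun i hi =>
            weight_le_of_pos hw hW hcU.1 hx i (Finset.mem_filter.1 hi).2
      _ ≤ ∑ i : Fin m, (c i.castSucc - nominalProfit w i.castSucc) :=
          Finset.sum_le_sum_of_subset_of_nonneg (Finset.subset_univ S) fun i _ _ => hbump _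
      _ ≤ ∑ j, (c j - nominalProfit w j) := by
          rw [Fin.sum_univ_castSucc (f := fun j => c j - nominalProfit w j)]
          linarith [hbump (Fin.last m)]
      _ ≤ W := hcU.2
  · rw [Finset.sum_filter]
    refine Finset.sum_le_sum fun i _ => ?_
    have hwi : (0 : ℝ) ≤ w i := by exact_mod_cast (zero_le_one.trans (hw i))
    split_ifs with hxi
    · exact mul_le_of_le_one_right hwi (hx.1.2 _).2
    · rw [le_antisymm (not_lt.1 hxi) (hx.1.2 _).1, mul_zero]

theorem sub_two_mul_le_sum_leaderCost_mul (hcU : c ∈ uncertaintySet w W)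
    (hx : optimalKP (weights w) c W x) {V : ℝ}
    (hV : ∀ S : Finset (Fin m), ∑ i ∈ S, (w i : ℝ) ≤ W → ∑ i ∈ S, (w i : ℝ) ≤ V) :
    W - 2 * V ≤ ∑ j, leaderCost w j * x j := by
  obtain ⟨S, hSW, hload⟩ := exists_subset_sum_le hw hW hcU hx
  rw [sum_leaderCost_mul, sum_weights_mul_eq hw hW hcU.1 hx]
  linarith [hV S hSW]

end Leader

section Construction

variable (w W)

/-- Raising `c_i` by `w_i` lifts the ratio of item `i` to `2M`, the ratio of the last item. -/
noncomputable def bumpedProfit (S : Finset (Fin m)) : Fin (m + 1) → ℝ :=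
  nominalProfit w + Fin.snoc (fun i => if i ∈ S then (w i : ℝ) else 0) 0

noncomputable def greedyResponse (S : Finset (Fin m)) : Fin (m + 1) → ℝ :=
  Fin.snoc (fun i => if i ∈ S then 1 else 0) ((W - ∑ i ∈ S, (w i : ℝ)) / bigM w)

variable {w W} {S : Finset (Fin m)}

@[simp] theorem bumpedProfit_castSucc (i : Fin m) : bumpedProfit w S i.castSucc =
    (2 * bigM w - 1) * w i + if i ∈ S then (w i : ℝ) else 0 := by
  simp [bumpedProfit]

@[simp] theorem bumpedProfit_last : bumpedProfit w S (Fin.last m) = 2 * bigM w ^ 2 := by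
  simp [bumpedProfit]

@[simp] theorem greedyResponse_castSucc (i : Fin m) :
    greedyResponse w W S i.castSucc = if i ∈ S then 1 else 0 := by
  simp [greedyResponse]

@[simp] theorem greedyResponse_last :
    greedyResponse w W S (Fin.last m) = (W - ∑ i ∈ S, (w i : ℝ)) / bigM w := by
  simp [greedyResponse]

variable (hw : ∀ i, 1 ≤ w i)
include hw

theorem bumpedProfit_mem (hS : ∑ i ∈ S, (w i : ℝ) ≤ W) :
    bumpedProfit w S ∈ uncertaintySet w W := by
  refine ⟨fun j => le_add_of_nonneg_right ?_, ?_⟩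
  · induction j using Fin.lastCases with
    | last => simp
    | cast i =>
      have : (0 : ℝ) ≤ w i := by exact_mod_cast (zero_le_one.trans (hw i))
      simp only [Fin.snoc_castSucc]
      split_ifs <;> simp [this]
  · simpa [bumpedProfit, Fin.sum_univ_castSucc, Finset.sum_ite_mem] using hS

theorem sum_weights_mul_greedyResponse :
    ∑ j, weights w j * greedyResponse w W S j = W := by
  have hM := (bigM_pos hw).ne'
  simp [greedyResponse, Fin.sum_univ_castSucc, Finset.sum_ite_mem, mul_div_cancel₀ _ hM]

theorem sum_leaderCost_mul_greedyResponse :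
    ∑ j, leaderCost w j * greedyResponse w W S j = W - 2 * ∑ i ∈ S, (w i : ℝ) := by
  rw [sum_leaderCost_mul, sum_weights_mul_greedyResponse hw]
  simp [greedyResponse, Finset.sum_ite_mem]

theorem optimalKP_greedyResponse (hW : W ≤ ∑ i, w i - 1) (hS : ∑ i ∈ S, (w i : ℝ) ≤ W) :
    optimalKP (weights w) (bumpedProfit w S) W (greedyResponse w W S) := by
  have hM := bigM_pos hw
  have hbox : ∀ j, 0 ≤ greedyResponse w W S j ∧ greedyResponse w W S j ≤ 1 := by
    intro j
    induction j using Fin.lastCases with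
    | last =>
      have hS₀ : 0 ≤ ∑ i ∈ S, (w i : ℝ) :=
        Finset.sum_nonneg fun i _ => by exact_mod_cast (zero_le_one.trans (hw i))
      rw [greedyResponse_last, div_le_one hM]
      exact ⟨div_nonneg (by linarith) hM.le, by linarith [lt_bigM hW]⟩
    | cast i =>
      rw [greedyResponse_castSucc]
      split_ifs <;> norm_num
  refine optimalKP_of_le_mul (r := 2 * bigM w) (by positivity) (fun j => ?_) (fun j => ?_)
    ⟨(sum_weights_mul_greedyResponse hw).le, hbox⟩ (sum_weights_mul_greedyResponse hw)
  · induction j using Fin.lastCases with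
    | last => exact le_of_eq (by rw [bumpedProfit_last, weights_last]; ring)
    | cast i =>
      have : (1 : ℝ) ≤ w i := by exact_mod_cast hw i
      simp only [bumpedProfit_castSucc, weights_castSucc]
      split_ifs <;> linarith
  · induction j using Fin.lastCases with
    | last => rw [bumpedProfit_last, weights_last]; ring
    | cast i =>
      simp only [bumpedProfit_castSucc, greedyResponse_castSucc, weights_castSucc]
      split_ifs <;> ring

end Construction

theorem sInf_pessimisticValues (hw : ∀ i, 1 ≤ w i) (hW : W ≤ ∑ i, w i - 1)
    {S : Finset (Fin m)} (hS : ∑ i ∈ S, (w i : ℝ) ≤ W)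
    (hmax : ∀ T : Finset (Fin m), ∑ i ∈ T, (w i : ℝ) ≤ W →
      ∑ i ∈ T, (w i : ℝ) ≤ ∑ i ∈ S, (w i : ℝ)) :
    sInf (pessimisticValues w W) = W - 2 * ∑ i ∈ S, (w i : ℝ) := by
  refine IsLeast.csInf_eq ⟨⟨bumpedProfit w S, bumpedProfit_mem hw hS, greedyResponse w W S,
    optimalKP_greedyResponse hw hW hS, fun x' hx' => ?_,
    (sum_leaderCost_mul_greedyResponse hw).symm⟩, ?_⟩
  · rw [sum_leaderCost_mul_greedyResponse hw]
    exact sub_two_mul_le_sum_leaderCost_mul hw hW (bumpedProfit_mem hw hS) hx' hmax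
  · rintro v ⟨c, hcU, x, hx, -, rfl⟩
    exact sub_two_mul_le_sum_leaderCost_mul hw hW hcU hx hmax

end SimplicialReduction

theorem Finset.exists_max_sum_le {ι : Type*} [Fintype ι] (f : ι → ℝ) {t : ℝ} (ht : 0 ≤ t) :
    ∃ S : Finset ι, ∑ i ∈ S, f i ≤ t ∧ ∀ T : Finset ι, ∑ i ∈ T, f i ≤ t →
      ∑ i ∈ T, f i ≤ ∑ i ∈ S, f i := by
  obtain ⟨S, hS, hmax⟩ :=
    (Finset.univ.filter fun S : Finset ι => ∑ i ∈ S, f i ≤ t).exists_max_image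
      (fun S => ∑ i ∈ S, f i) ⟨∅, by simpa using ht⟩
  exact ⟨S, (Finset.mem_filter.1 hS).2, fun T hT => hmax T (by simpa using hT)⟩

/-- Evaluating the leader's objective of the simplicial-uncertainty reduction
instance at the single capacity `b = W` decides the subset sum instance:
`f(W) = −W` iff `W` is a subset sum of `{w₁, …, w_m}`; and if `W` is not a
subset sum, then `f(W) = W − 2V` with `V` the largest subset sum below `W`. -/
theorem simplicial_evaluation_decides_subset_sum
    (m : ℕ) (w : Fin m → ℤ) (W : ℤ) (hw : ∀ i, 1 ≤ w i)
    (hW1 : 1 ≤ W) (hW2 : W ≤ (∑ i, w i) - 1) :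
    let M : ℝ := (∑ i, (w i : ℝ)) + 1
    let a : Fin (m + 1) → ℝ := fun i =>
      if h : (i : ℕ) < m then (w ⟨i, h⟩ : ℝ) else M
    let d : Fin (m + 1) → ℝ := fun i =>
      if h : (i : ℕ) < m then -(w ⟨i, h⟩ : ℝ) else M
    let chat : Fin (m + 1) → ℝ := fun i =>
      if h : (i : ℕ) < m then (2 * M - 1) * (w ⟨i, h⟩ : ℝ) else 2 * M ^ 2
    let U : Set (Fin (m + 1) → ℝ) :=
      {c | (∀ i, chat i ≤ c i) ∧ (∑ i, (c i - chat i)) ≤ (W : ℝ)}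
    let fW : ℝ := sInf {v : ℝ | ∃ c ∈ U, ∃ x : Fin (m + 1) → ℝ,
      optimalKP a c (W : ℝ) x ∧
      (∀ x' : Fin (m + 1) → ℝ, optimalKP a c (W : ℝ) x' →
        ∑ i, d i * x i ≤ ∑ i, d i * x' i) ∧
      v = ∑ i, d i * x i}
    (fW = -(W : ℝ) ↔ ∃ S : Finset (Fin m), (∑ i ∈ S, (w i : ℝ)) = (W : ℝ)) ∧
    (¬ (∃ S : Finset (Fin m), (∑ i ∈ S, (w i : ℝ)) = (W : ℝ)) →
      ∀ V : ℝ, (∃ S : Finset (Fin m), V = ∑ i ∈ S, (w i : ℝ)) → V < (W : ℝ) →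
        (∀ V' : ℝ, (∃ S : Finset (Fin m), V' = ∑ i ∈ S, (w i : ℝ)) →
          V' < (W : ℝ) → V' ≤ V) →
        fW = (W : ℝ) - 2 * V) := by
  intro M a d chat U fW
  have hfW : fW = sInf (SimplicialReduction.pessimisticValues w W) := rfl
  rw [hfW]
  constructor
  · obtain ⟨S, hS, hmax⟩ := Finset.exists_max_sum_le (fun i => (w i : ℝ))
      (by exact_mod_cast zero_le_one.trans hW1 : (0 : ℝ) ≤ W)
    rw [SimplicialReduction.sInf_pessimisticValues hw hW2 hS hmax]
    refine ⟨fun h => ⟨S, by linarith⟩, fun ⟨T, hT⟩ => ?_⟩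
    linarith [hmax T hT.le]
  · rintro hW V ⟨S, rfl⟩ hS hmax
    exact SimplicialReduction.sInf_pessimisticValues hw hW2 hS.le fun T hT =>
      hmax _ ⟨T, rfl⟩ (hT.lt_of_ne fun h => hW ⟨T, h⟩)
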